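/- arXiv:2006.10815 — 2 statements merged into one kernel-verified Lean document; each statement's English description precedes it below -/
import Mathlib

section
/- The function OPT(P) = min over y ∈ ℝ^m of f(P y) is not quasiconvex in P in general: there exists a strongly convex function f : ℝ^3 → ℝ and matrices P, P' ∈ ℝ^(3×2) such that OPT(P) = OPT(P') = 0 but OPT((P+P')/2) > 0. Concretely, with f(x) = ‖x − (1,1,1)‖², P = [[1,0],[1,0],[0,2]], and P' = [[0,1],[0,1],[2,0]], one has min_y f(P y) = 0, min_y f(P' y) = 0, but min_y f(((P+P')/2) y) > 0. -/
theorem opt_not_quasiconvex_in_P :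
    ∃ (f : (Fin 3 → ℝ) → ℝ) (P P' : Matrix (Fin 3) (Fin 2) ℝ),
      StrictConvexOn ℝ Set.univ f ∧
      f = (fun x => ∑ i, (x i - 1) ^ 2) ∧
      P = Matrix.of ![![1, 0], ![1, 0], ![0, 2]] ∧
      P' = Matrix.of ![![0, 1], ![0, 1], ![2, 0]] ∧
      (⨅ y : Fin 2 → ℝ, f (P.mulVec y)) = 0 ∧
      (⨅ y : Fin 2 → ℝ, f (P'.mulVec y)) = 0 ∧
      0 < ⨅ y : Fin 2 → ℝ, f (((1 / 2 : ℝ) • (P + P')).mulVec y) := by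
  set f : (Fin 3 → ℝ) → ℝ := fun x => ∑ i, (x i - 1) ^ 2 with hf
  refine ⟨f, _, _, ?_, rfl, rfl, rfl, ?_, ?_, ?_⟩
  · refine ⟨convex_univ, ?_⟩
    intro x _ y _ hxy a b ha hb hab
    obtain ⟨i, hi⟩ := Function.ne_iff.mp hxy
    simp only [hf, Pi.add_apply, Pi.smul_apply, smul_eq_mul]
    rw [Finset.mul_sum, Finset.mul_sum, ← Finset.sum_add_distrib]
    refine Finset.sum_lt_sum (fun j _ => ?_) ⟨i, Finset.mem_univ i, ?_⟩
    · have key : a * (x j - 1) ^ 2 + b * (y j - 1) ^ 2 - (a * x j + b * y j - 1) ^ 2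
          = a * b * (x j - y j) ^ 2 := by
        have hb' : b = 1 - a := by linarith
        subst hb'; ring
      nlinarith [mul_nonneg (mul_pos ha hb).le (sq_nonneg (x j - y j))]
    · have hne : x i - y i ≠ 0 := sub_ne_zero.mpr hi
      have hpos : (x i - y i) ^ 2 > 0 := by positivity
      have key : a * (x i - 1) ^ 2 + b * (y i - 1) ^ 2 - (a * x i + b * y i - 1) ^ 2
          = a * b * (x i - y i) ^ 2 := by
        have hb' : b = 1 - a := by linarith
        subst hb'; ring
      nlinarith [mul_pos (mul_pos ha hb) hpos]
  · apply le_antisymm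
    · have h := ciInf_le (f := fun y : Fin 2 → ℝ => f ((Matrix.of ![![1, 0], ![1, 0], ![0, 2]]).mulVec y))
        ⟨0, by rintro _ ⟨y, rfl⟩; positivity⟩ ![1, 1/2]
      simpa [hf, Matrix.mulVec, dotProduct, Fin.sum_univ_three, Fin.sum_univ_two] using h
    · exact le_ciInf fun y => by positivity
  · apply le_antisymm
    · have h := ciInf_le (f := fun y : Fin 2 → ℝ => f ((Matrix.of ![![0, 1], ![0, 1], ![2, 0]]).mulVec y))
        ⟨0, by rintro _ ⟨y, rfl⟩; positivity⟩ ![1/2, 1]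
      simpa [hf, Matrix.mulVec, dotProduct, Fin.sum_univ_three, Fin.sum_univ_two] using h
    · exact le_ciInf fun y => by positivity
  · have : (0:ℝ) < 1/3 := by norm_num
    refine lt_of_lt_of_le this (le_ciInf fun y => ?_)
    simp only [hf, Matrix.smul_mulVec, Matrix.add_mulVec, Matrix.mulVec, dotProduct,
      Fin.sum_univ_three, Fin.sum_univ_two, Pi.smul_apply, Pi.add_apply, smul_eq_mul,
      Matrix.of_apply, Matrix.cons_val', Matrix.cons_val_zero, Matrix.cons_val_one,
      Matrix.head_cons, Matrix.empty_val', Matrix.cons_val_fin_one, Matrix.head_fin_const,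
      Matrix.cons_val_two, Matrix.tail_cons]
    nlinarith [sq_nonneg (3 * (y 0 + y 1) - 4)]
end

section
/- Let f : ℝ^n → ℝ be convex (hence quasiconvex) and let S ⊆ ℝ^n. Fix columns p₂,…,p_m ∈ ℝ^n. Define h(p₁) = inf over y ∈ ℝ^m with y ≥ 0 and Σ_i y_i p_i ∈ S of f(Σ_i y_i p_i), where p₁ varies. Then h is quasiconvex in p₁: for any p₁, p₁' ∈ ℝ^n and c ∈ [0,1], h(c p₁ + (1−c) p₁') ≤ max(h(p₁), h(p₁'))—assuming the infima are attained at points x = Σ y_i p_i and x' = Σ y'_i p'_i with the convention that the feasible regions are nonempty. -/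
/-- Quasiconvexity of the reparameterized optimal value in the first column:
given attained optima for column sets with first column `p 0` resp. `p' 0`
(agreeing in all other columns), any convex combination of the first columns
admits a feasible nonnegative-coefficient point whose objective value is at most
the max of the two optimal values. -/
theorem opt_quasiconvex_in_first_column {n m : ℕ} (f : (Fin n → ℝ) → ℝ)
    (hf : ConvexOn ℝ Set.univ f)
    (p p' : Fin (m + 1) → (Fin n → ℝ)) (hpp' : ∀ i, i ≠ 0 → p i = p' i)
    (y y' : Fin (m + 1) → ℝ) (hy : ∀ i, 0 ≤ y i) (hy' : ∀ i, 0 ≤ y' i)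
    (hopt : ∀ z : Fin (m + 1) → ℝ, (∀ i, 0 ≤ z i) →
      f (∑ i, y i • p i) ≤ f (∑ i, z i • p i))
    (hopt' : ∀ z : Fin (m + 1) → ℝ, (∀ i, 0 ≤ z i) →
      f (∑ i, y' i • p' i) ≤ f (∑ i, z i • p' i))
    (c : ℝ) (hc : c ∈ Set.Icc (0 : ℝ) 1) :
    ∃ z : Fin (m + 1) → ℝ, (∀ i, 0 ≤ z i) ∧
      f (z 0 • (c • p 0 + (1 - c) • p' 0) + ∑ i ∈ Finset.univ.erase 0, z i • p i) ≤
        max (f (∑ i, y i • p i)) (f (∑ i, y' i • p' i)) := by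
  obtain ⟨hc0, hc1⟩ := hc
  have hexists : ∃ l z0 : ℝ, 0 ≤ l ∧ l ≤ 1 ∧ 0 ≤ z0 ∧
      c * z0 = l * y 0 ∧ (1 - c) * z0 = (1 - l) * y' 0 := by
    by_cases hD : c * y' 0 + (1 - c) * y 0 = 0
    · have h1 : c * y' 0 = 0 := by
        nlinarith [mul_nonneg hc0 (hy' 0), mul_nonneg (by linarith : (0:ℝ) ≤ 1 - c) (hy 0)]
      have h2 : (1 - c) * y 0 = 0 := by linarith
      exact ⟨c, c * y 0 + (1 - c) * y' 0, hc0, hc1,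
        add_nonneg (mul_nonneg hc0 (hy 0)) (mul_nonneg (by linarith) (hy' 0)),
        by nlinarith, by nlinarith⟩
    · have hDpos : 0 < c * y' 0 + (1 - c) * y 0 := by
        rcases lt_or_eq_of_le (add_nonneg (mul_nonneg hc0 (hy' 0))
          (mul_nonneg (by linarith : (0:ℝ) ≤ 1 - c) (hy 0))) with h | h
        · exact h
        · exact absurd h.symm hD
      refine ⟨c * y' 0 / (c * y' 0 + (1 - c) * y 0),
        y 0 * y' 0 / (c * y' 0 + (1 - c) * y 0),
        div_nonneg (mul_nonneg hc0 (hy' 0)) hDpos.le, ?_,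
        div_nonneg (mul_nonneg (hy 0) (hy' 0)) hDpos.le, ?_, ?_⟩
      · rw [div_le_one hDpos]
        nlinarith [mul_nonneg (by linarith : (0:ℝ) ≤ 1 - c) (hy 0)]
      · field_simp
      · field_simp
        ring
  obtain ⟨l, z0, hl0, hl1, hz0, he1, he2⟩ := hexists
  set z : Fin (m + 1) → ℝ := fun i => if i = 0 then z0 else l * y i + (1 - l) * y' i with hz
  refine ⟨z, ?_, ?_⟩
  · intro i
    by_cases h : i = 0
    · simp [hz, h, hz0]
    · simp only [hz, if_neg h]
      exact add_nonneg (mul_nonneg hl0 (hy i)) (mul_nonneg (by linarith) (hy' i))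
  · have hkey : z 0 • (c • p 0 + (1 - c) • p' 0) + ∑ i ∈ Finset.univ.erase 0, z i • p i
        = l • (∑ i, y i • p i) + (1 - l) • (∑ i, y' i • p' i) := by
      have hS2 : (∑ i, y i • p i) = y 0 • p 0 + ∑ i ∈ Finset.univ.erase 0, y i • p i :=
        (Finset.add_sum_erase _ _ (Finset.mem_univ 0)).symm
      have hS'2 : (∑ i, y' i • p' i) = y' 0 • p' 0 + ∑ i ∈ Finset.univ.erase 0, y' i • p i := by
        rw [← Finset.add_sum_erase _ _ (Finset.mem_univ 0)]
        congr 1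
        exact Finset.sum_congr rfl fun i hi => by
          rw [hpp' i (Finset.ne_of_mem_erase hi)]
      rw [hS2, hS'2]
      have hz0eq : z 0 = z0 := by simp [hz]
      have hzsum : ∑ i ∈ Finset.univ.erase 0, z i • p i
          = ∑ i ∈ Finset.univ.erase 0, ((l * y i) • p i + ((1 - l) * y' i) • p i) :=
        Finset.sum_congr rfl fun i hi => by
          rw [hz]
          simp only [if_neg (Finset.ne_of_mem_erase hi)]
          rw [add_smul]
      rw [hz0eq, hzsum, Finset.sum_add_distrib]
      simp only [smul_add, Finset.smul_sum, smul_smul]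
      rw [mul_comm z0 c, mul_comm z0 (1 - c), he1, he2]
      abel
    rw [hkey]
    calc f (l • (∑ i, y i • p i) + (1 - l) • (∑ i, y' i • p' i))
        ≤ l * f (∑ i, y i • p i) + (1 - l) * f (∑ i, y' i • p' i) :=
          hf.2 (Set.mem_univ _) (Set.mem_univ _) hl0 (by linarith) (by ring)
      _ ≤ l * max (f (∑ i, y i • p i)) (f (∑ i, y' i • p' i))
          + (1 - l) * max (f (∑ i, y i • p i)) (f (∑ i, y' i • p' i)) := by
          gcongr
          · exact le_max_left _ _
          · exact le_max_right _ _
      _ = max (f (∑ i, y i • p i)) (f (∑ i, y' i • p' i)) := by ring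
end
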